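/- For every z ∈ ℝⁿ with ‖z‖₂ = 1, letting z₀² = min_k z_k², the minimum over unit vectors v ∈ ℝⁿ with vᵀz = 0 of Σ_{k=1}^n v_k² z_k² is at least z₀² and at most (n/(n−1))(1 − z₀²) z₀². -/

import Mathlib

/-!
The lower bound holds because `∑ v_k² z_k²` is a convex combination of the `z_k²`.
For the upper bound let `z₀² = z_{i₀}²` be the minimum. If `z₀ = 0`, the basis vector `e_{i₀}`
is tangent at `z` and gives `0`. Otherwise all `z_k ≠ 0`, and the tangent vector `w` with
`w_k = 1 / z_k` for `k ≠ i₀` and `w_{i₀} = -(n - 1) / z₀` has `∑ w_k² z_k² = n (n - 1)`.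
By Cauchy–Schwarz `∑_{k ≠ i₀} 1 / z_k² ≥ (n - 1)² / (1 - z₀²)`, so
`‖w‖² ≥ (n - 1)² / (z₀² (1 - z₀²))`, and normalizing `w` gives the bound.
-/

open Finset

section Tangent

variable {ι : Type*} [Fintype ι] (z : ι → ℝ)

theorem iInf_sq_le_sum_sq_mul_sq {v : ι → ℝ} (hv : ∑ k, v k ^ 2 = 1) :
    (⨅ k, z k ^ 2) ≤ ∑ k, v k ^ 2 * z k ^ 2 :=
  calc (⨅ k, z k ^ 2) = ∑ k, v k ^ 2 * ⨅ k, z k ^ 2 := by rw [← sum_mul, hv, one_mul]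
    _ ≤ ∑ k, v k ^ 2 * z k ^ 2 := by
      gcongr with k
      exact ciInf_le (Finite.bddBelow_range _) k

theorem exists_unit_orthogonal_of_sum_sq_mul_sq_le {w : ι → ℝ} {c : ℝ}
    (hw : 0 < ∑ k, w k ^ 2) (horth : ∑ k, w k * z k = 0)
    (hle : ∑ k, w k ^ 2 * z k ^ 2 ≤ c * ∑ k, w k ^ 2) :
    ∃ v : ι → ℝ, ∑ k, v k ^ 2 = 1 ∧ ∑ k, v k * z k = 0 ∧ ∑ k, v k ^ 2 * z k ^ 2 ≤ c := by
  set t := √(∑ k, w k ^ 2)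
  have ht : t ^ 2 = ∑ k, w k ^ 2 := Real.sq_sqrt hw.le
  refine ⟨fun k => w k / t, ?_, ?_, ?_⟩
  · simp only [div_pow, ← sum_div, ht]
    exact div_self hw.ne'
  · simp only [div_mul_eq_mul_div, ← sum_div, horth, zero_div]
  · simp only [div_pow, div_mul_eq_mul_div, ← sum_div, ht]
    exact (div_le_iff₀ hw).2 hle

theorem exists_unit_orthogonal_sum_sq_mul_sq_eq_zero [DecidableEq ι] {i₀ : ι} (hi₀ : z i₀ = 0) :
    ∃ v : ι → ℝ, ∑ k, v k ^ 2 = 1 ∧ ∑ k, v k * z k = 0 ∧ ∑ k, v k ^ 2 * z k ^ 2 = 0 := by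
  refine ⟨Pi.single i₀ 1, ?_, ?_, ?_⟩ <;> simp [Pi.single_apply, hi₀]

theorem exists_unit_orthogonal_sum_sq_mul_sq_le [DecidableEq ι] (hcard : 2 ≤ Fintype.card ι)
    (hz : ∑ k, z k ^ 2 = 1) (hz₀ : ∀ k, z k ≠ 0) (i₀ : ι) :
    ∃ v : ι → ℝ, ∑ k, v k ^ 2 = 1 ∧ ∑ k, v k * z k = 0 ∧
      ∑ k, v k ^ 2 * z k ^ 2 ≤
        ((Fintype.card ι : ℝ) / ((Fintype.card ι : ℝ) - 1)) * (1 - z i₀ ^ 2) * z i₀ ^ 2 := by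
  set m : ℝ := (Fintype.card ι : ℝ) - 1 with hm
  set a := z i₀ ^ 2
  set s := univ.erase i₀
  have hm1 : 1 ≤ m := by rw [hm, le_sub_iff_add_le]; exact_mod_cast hcard
  have ha : 0 < a := by positivity [hz₀ i₀]
  have hs : (#s : ℝ) = m := by
    rw [card_erase_of_mem (mem_univ _), card_univ, Nat.cast_sub (by omega), Nat.cast_one]
  have split (f : ι → ℝ) : ∑ k, f k = f i₀ + ∑ k ∈ s, f k := (add_sum_erase _ _ (mem_univ _)).symm
  set w : ι → ℝ := fun k => if k = i₀ then -m / z i₀ else (z k)⁻¹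
  have hw₀ : w i₀ = -m / z i₀ := if_pos rfl
  have hw (k) (hk : k ∈ s) : w k = (z k)⁻¹ := if_neg (ne_of_mem_erase hk)
  have hrest : ∑ k ∈ s, z k ^ 2 = 1 - a := by linarith [split fun k => z k ^ 2]
  have hCS : m ^ 2 ≤ (1 - a) * ∑ k ∈ s, (z k ^ 2)⁻¹ := by
    simpa [hz₀, hs, hrest, inv_pow] using sum_mul_sq_le_sq_mul_sq s z fun k => (z k)⁻¹
  have horth : ∑ k, w k * z k = 0 := by
    rw [split, hw₀, sum_congr rfl fun k hk => by rw [hw k hk, inv_mul_cancel₀ (hz₀ k)]]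
    simp [hs, hz₀ i₀]
  have hquad : ∑ k, w k ^ 2 * z k ^ 2 = m * (m + 1) := by
    rw [split, hw₀, sum_congr rfl fun k hk => by rw [hw k hk, ← mul_pow, inv_mul_cancel₀ (hz₀ k)]]
    rw [one_pow, sum_const, nsmul_one, hs, ← mul_pow, div_mul_cancel₀ _ (hz₀ i₀)]
    ring
  have hnorm : ∑ k, w k ^ 2 = m ^ 2 / a + ∑ k ∈ s, (z k ^ 2)⁻¹ := by
    rw [split, hw₀, div_pow, neg_sq, sum_congr rfl fun k hk => by rw [hw k hk, inv_pow]]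
  refine exists_unit_orthogonal_of_sum_sq_mul_sq_le z (by rw [hnorm]; positivity) horth ?_
  rw [hquad, hnorm, show (Fintype.card ι : ℝ) = m + 1 by ring]
  have hm₀ : 0 < m := by linarith
  calc m * (m + 1) = (m + 1) / m * ((1 - a) * m ^ 2 + a * m ^ 2) := by field_simp; ring
    _ ≤ (m + 1) / m * ((1 - a) * m ^ 2 + a * ((1 - a) * ∑ k ∈ s, (z k ^ 2)⁻¹)) := by gcongr
    _ = (m + 1) / m * (1 - a) * a * (m ^ 2 / a + ∑ k ∈ s, (z k ^ 2)⁻¹) := by field_simp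

end Tangent

theorem stmt8 {n : ℕ} (hn : 2 ≤ n) (z : Fin n → ℝ) (hz : ∑ k, z k ^ 2 = 1) :
    (∀ v : Fin n → ℝ, ∑ k, v k ^ 2 = 1 → ∑ k, v k * z k = 0 →
      (⨅ k, z k ^ 2) ≤ ∑ k, v k ^ 2 * z k ^ 2) ∧
    (∃ v : Fin n → ℝ, ∑ k, v k ^ 2 = 1 ∧ ∑ k, v k * z k = 0 ∧
      ∑ k, v k ^ 2 * z k ^ 2 ≤
        ((n : ℝ) / ((n : ℝ) - 1)) * (1 - ⨅ k, z k ^ 2) * (⨅ k, z k ^ 2)) := by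
  have : Nonempty (Fin n) := ⟨⟨0, by omega⟩⟩
  obtain ⟨i₀, hi₀⟩ := Finite.exists_min fun k => z k ^ 2
  have hinf : (⨅ k, z k ^ 2) = z i₀ ^ 2 :=
    le_antisymm (ciInf_le (Finite.bddBelow_range _) i₀) (le_ciInf hi₀)
  refine ⟨fun v hv _ => iInf_sq_le_sum_sq_mul_sq z hv, ?_⟩
  rw [hinf]
  by_cases h₀ : z i₀ = 0
  · obtain ⟨v, hv, horth, hzero⟩ := exists_unit_orthogonal_sum_sq_mul_sq_eq_zero z h₀
    exact ⟨v, hv, horth, by simp [hzero, h₀]⟩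
  · have hz₀ (k : Fin n) : z k ≠ 0 := fun hk =>
      h₀ <| (pow_eq_zero_iff two_ne_zero).1 <| le_antisymm (by simpa [hk] using hi₀ k) (sq_nonneg _)
    simpa only [Fintype.card_fin] using
      exists_unit_orthogonal_sum_sq_mul_sq_le z (by rwa [Fintype.card_fin]) hz hz₀ i₀
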